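/- arXiv:2307.09429 — 2 statements merged into one kernel-verified Lean document; each statement's English description precedes it below -/
import Mathlib

section
/- Let P ⊂ ℝ^d be a d-dimensional polytope and Λ ⊂ ℝ^d a full-dimensional lattice. Then there exists a lattice reduced d-dimensional polytope Q ⊆ P with wdt_Λ(Q) = wdt_Λ(P) and with at most as many vertices as P. -/
open scoped Pointwise

noncomputable section

/-- Standard dot product on `Fin d → ℝ`. -/
def dot {d : ℕ} (x y : Fin d → ℝ) : ℝ := ∑ i, x i * y i

/-- A convex body: convex, compact, with nonempty interior. -/
def IsConvexBody {d : ℕ} (C : Set (Fin d → ℝ)) : Prop :=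
  Convex ℝ C ∧ IsCompact C ∧ (interior C).Nonempty

/-- A full-dimensional lattice: the integer span of a basis of `ℝ^d`. -/
def IsLattice {d : ℕ} (L : Set (Fin d → ℝ)) : Prop :=
  ∃ B : Module.Basis (Fin d) ℝ (Fin d → ℝ),
    L = Set.range (fun z : Fin d → ℤ => ∑ i, (z i : ℝ) • B i)

/-- The dual lattice: vectors pairing integrally with all lattice vectors. -/
def dualLattice {d : ℕ} (L : Set (Fin d → ℝ)) : Set (Fin d → ℝ) :=
  {y | ∀ x ∈ L, ∃ n : ℤ, dot x y = (n : ℝ)}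

/-- Width of `C` in direction `y`: `sup_{a,b ∈ C} y·(a-b)`. -/
def widthDir {d : ℕ} (C : Set (Fin d → ℝ)) (y : Fin d → ℝ) : ℝ :=
  sSup {r | ∃ a ∈ C, ∃ b ∈ C, r = dot y (a - b)}

/-- Lattice width of `C` with respect to a lattice `L`. -/
def latticeWidth {d : ℕ} (C L : Set (Fin d → ℝ)) : ℝ :=
  sInf {w | ∃ y ∈ dualLattice L, y ≠ 0 ∧ w = widthDir C y}

/-- A primitive lattice vector: a nonzero lattice vector such that no proper
fraction of it is a lattice vector. -/
def IsPrimitiveVec {d : ℕ} (L : Set (Fin d → ℝ)) (v : Fin d → ℝ) : Prop :=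
  v ∈ L ∧ v ≠ 0 ∧ ∀ t : ℝ, 0 < t → t < 1 → t • v ∉ L

/-- Lattice diameter of `C` w.r.t. `L`: the supremum of lattice lengths of
lattice segments contained in `C`, a segment of lattice length `t` being one of
the form `[a, a + t • v]` with `v` primitive in `L`. -/
def latticeDiam {d : ℕ} (C L : Set (Fin d → ℝ)) : ℝ :=
  sSup {t : ℝ | 0 ≤ t ∧ ∃ a v, IsPrimitiveVec L v ∧ segment ℝ a (a + t • v) ⊆ C}

/-- The polar body `K* = {y : x·y ≤ 1 ∀ x ∈ K}`. -/
def polarBody {d : ℕ} (K : Set (Fin d → ℝ)) : Set (Fin d → ℝ) :=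
  {y | ∀ x ∈ K, dot x y ≤ 1}

/-- First successive minimum of `K` w.r.t. the lattice `L`. -/
def lambda1 {d : ℕ} (K L : Set (Fin d → ℝ)) : ℝ :=
  sInf {r : ℝ | 0 ≤ r ∧ ∃ x ∈ L, x ≠ 0 ∧ x ∈ r • K}

/-- The difference body `C - C`. -/
def diffBody {d : ℕ} (C : Set (Fin d → ℝ)) : Set (Fin d → ℝ) := C - C

/-- `C` is lattice reduced w.r.t. `L`: it is a convex body and no convex body
properly contained in it has the same lattice width. -/
def IsLatticeReduced {d : ℕ} (C L : Set (Fin d → ℝ)) : Prop :=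
  IsConvexBody C ∧ ∀ C', IsConvexBody C' → C' ⊂ C → latticeWidth C' L ≠ latticeWidth C L

/-- `C` is lattice complete w.r.t. `L`: it is a convex body and no convex body
properly containing it has the same lattice diameter. -/
def IsLatticeComplete {d : ℕ} (C L : Set (Fin d → ℝ)) : Prop :=
  IsConvexBody C ∧ ∀ C', IsConvexBody C' → C ⊂ C' → latticeDiam C' L ≠ latticeDiam C L

/-- A width direction of `C`: a nonzero dual lattice vector realizing the
lattice width. -/
def IsWidthDirection {d : ℕ} (C L : Set (Fin d → ℝ)) (y : Fin d → ℝ) : Prop :=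
  y ∈ dualLattice L ∧ y ≠ 0 ∧ widthDir C y = latticeWidth C L

/-- A diameter direction of `C`: a primitive lattice vector parallel to a
lattice segment in `C` of maximal lattice length. -/
def IsDiameterDirection {d : ℕ} (C L : Set (Fin d → ℝ)) (v : Fin d → ℝ) : Prop :=
  IsPrimitiveVec L v ∧ ∃ a, segment ℝ a (a + latticeDiam C L • v) ⊆ C

/-- A diameter segment of `C`: a lattice segment contained in `C` whose lattice
length equals the lattice diameter of `C`. -/
def IsDiameterSegment {d : ℕ} (C L : Set (Fin d → ℝ)) (a b : Fin d → ℝ) : Prop :=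
  segment ℝ a b ⊆ C ∧ ∃ v, IsPrimitiveVec L v ∧ b = a + latticeDiam C L • v

/-- A polytope: the convex hull of finitely many points. -/
def IsPolytope {d : ℕ} (C : Set (Fin d → ℝ)) : Prop :=
  ∃ V : Finset (Fin d → ℝ), C = convexHull ℝ (V : Set (Fin d → ℝ))

/-- A facet of a `d`-dimensional body: a face (extreme subset) of dimension `d-1`. -/
def IsFacetOf {d : ℕ} (P F : Set (Fin d → ℝ)) : Prop :=
  IsExtreme ℝ P F ∧ Module.finrank ℝ (vectorSpan ℝ F) + 1 = d

/-- The integer lattice `ℤ^d` inside `Fin d → ℝ`. -/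
def intLattice (d : ℕ) : Set (Fin d → ℝ) := {x | ∀ i, ∃ n : ℤ, x i = (n : ℝ)}


/-!
Polytopes with at most `n` vertices, `n` the number of vertices of `P`, are parametrized by
`n`-tuples of points of `P`. The tuples whose hull has width at least `w = wdt_Λ(P)` in every
dual lattice direction form a compact set, on which we minimize a continuous functional
(`supportSeries`) that strictly decreases when the hull strictly shrinks. The hull `Q` of a
minimizer has lattice width `w`, and it is full-dimensional because a flat body is thin in some
lattice direction. If a convex body `C ⊊ Q` had the same lattice width, move a vertex `v ∉ C` of `Q`
slightly towards a point of `C`. In a direction where `Q` is no wider than `C`, both supporting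
hyperplanes of `Q` touch it at vertices other than `v`, so the width is kept; the finitely many
remaining directions of width below `w + 1` have slack, and in all others the width stays above
`w` anyway. The new tuple is still feasible and its hull misses `v`, contradicting minimality.
-/

open Matrix Set Submodule

section Dot
variable {d : ℕ}

lemma dot_eq_dotProduct (x y : Fin d → ℝ) : dot x y = x ⬝ᵥ y := rfl

lemma dot_comm (x y : Fin d → ℝ) : dot x y = dot y x := dotProduct_comm x y

lemma dot_sub_eq_add_dot_neg (y a b : Fin d → ℝ) : dot y (a - b) = dot y a + dot (-y) b := by
  rw [dot_eq_dotProduct, dot_eq_dotProduct, dot_eq_dotProduct, dotProduct_sub, neg_dotProduct,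
    sub_eq_add_neg]

lemma abs_dot_le (x y : Fin d → ℝ) : |dot x y| ≤ d * (‖x‖ * ‖y‖) := by
  calc |dot x y| ≤ ∑ i, |x i| * |y i| := by
        simpa only [dot, abs_mul] using Finset.abs_sum_le_sum_abs (fun i => x i * y i) _
    _ ≤ ∑ _i : Fin d, ‖x‖ * ‖y‖ := by
        gcongr with i
        · exact norm_le_pi_norm x i
        · exact norm_le_pi_norm y i
    _ = d * (‖x‖ * ‖y‖) := by simp

lemma exists_dot_eq_apply (f : Module.Dual ℝ (Fin d → ℝ)) : ∃ u, ∀ x, f x = dot u x :=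
  ⟨(dotProductEquiv ℝ (Fin d)).symm f, fun x => by
    conv_lhs => rw [← (dotProductEquiv ℝ (Fin d)).apply_symm_apply f]
    rfl⟩

lemma convex_dot_le (y : Fin d → ℝ) (c : ℝ) : Convex ℝ {x | dot y x ≤ c} :=
  convex_halfSpace_le (dotProductBilin ℝ ℝ y).isLinear c

lemma continuous_dot : Continuous fun p : (Fin d → ℝ) × (Fin d → ℝ) => dot p.1 p.2 :=
  continuous_finsetSum _ fun i _ => ((continuous_apply i).comp continuous_fst).mul
    ((continuous_apply i).comp continuous_snd)

end Dot

section Width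
variable {d : ℕ} {C D L : Set (Fin d → ℝ)} {y : Fin d → ℝ}

lemma widthDir_nonneg (C : Set (Fin d → ℝ)) (y : Fin d → ℝ) : 0 ≤ widthDir C y := by
  rcases C.eq_empty_or_nonempty with rfl | ⟨a, ha⟩
  · simp [widthDir]
  by_cases hbdd : BddAbove {r | ∃ a ∈ C, ∃ b ∈ C, r = dot y (a - b)}
  · exact le_csSup hbdd ⟨a, ha, a, ha, by simp [dot]⟩
  · exact (Real.sSup_of_not_bddAbove hbdd).ge

lemma widthDir_le (hC : C.Nonempty) {c : ℝ} (h : ∀ a ∈ C, ∀ b ∈ C, dot y (a - b) ≤ c) :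
    widthDir C y ≤ c := by
  obtain ⟨a, ha⟩ := hC
  exact csSup_le ⟨_, a, ha, a, ha, rfl⟩ fun r ⟨a, ha, b, hb, hr⟩ => hr ▸ h a ha b hb

lemma bddAbove_widthDir_set (hC : IsCompact C) (y : Fin d → ℝ) :
    BddAbove {r | ∃ a ∈ C, ∃ b ∈ C, r = dot y (a - b)} := by
  have hcont : Continuous fun p : (Fin d → ℝ) × (Fin d → ℝ) => dot y (p.1 - p.2) :=
    continuous_dot.comp (continuous_const.prodMk (continuous_fst.sub continuous_snd))
  obtain ⟨c, hc⟩ := (hC.prod hC).bddAbove_image hcont.continuousOn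
  exact ⟨c, fun r ⟨a, ha, b, hb, hr⟩ => hr ▸ hc ⟨(a, b), ⟨ha, hb⟩, rfl⟩⟩

lemma dot_sub_le_widthDir (hC : IsCompact C) {a b : Fin d → ℝ} (ha : a ∈ C) (hb : b ∈ C) :
    dot y (a - b) ≤ widthDir C y :=
  le_csSup (bddAbove_widthDir_set hC y) ⟨a, ha, b, hb, rfl⟩

lemma exists_widthDir_eq (hC : IsCompact C) (hne : C.Nonempty) (y : Fin d → ℝ) :
    ∃ a ∈ C, ∃ b ∈ C, widthDir C y = dot y (a - b) := by
  have hcont : ContinuousOn (fun x => dot y x) C :=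
    (continuous_dot.comp (continuous_const.prodMk continuous_id)).continuousOn
  obtain ⟨a, ha, hmax⟩ := hC.exists_isMaxOn hne hcont
  obtain ⟨b, hb, hmin⟩ := hC.exists_isMinOn hne hcont
  refine ⟨a, ha, b, hb, le_antisymm (widthDir_le hne fun a' ha' b' hb' => ?_)
    (dot_sub_le_widthDir hC ha hb)⟩
  simp only [dot_eq_dotProduct, dotProduct_sub] at hmax hmin ⊢
  exact sub_le_sub (isMaxOn_iff.mp hmax a' ha') (isMinOn_iff.mp hmin b' hb')

lemma widthDir_mono (hD : IsCompact D) (hC : C.Nonempty) (hCD : C ⊆ D) (y : Fin d → ℝ) :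
    widthDir C y ≤ widthDir D y :=
  widthDir_le hC fun _ ha _ hb => dot_sub_le_widthDir hD (hCD ha) (hCD hb)

lemma mul_norm_le_widthDir (hC : IsCompact C) {x : Fin d → ℝ} {ρ : ℝ} (hρ : 0 < ρ)
    (hball : Metric.ball x ρ ⊆ C) (y : Fin d → ℝ) : ρ * ‖y‖ ≤ widthDir C y := by
  have hmem : ∀ (i : Fin d) (s : ℝ), |s| ≤ 1 → x + (ρ / 2 * s) • Pi.single i 1 ∈ C := by
    intro i s hs
    apply hball
    rw [Metric.mem_ball, dist_eq_norm, add_sub_cancel_left, norm_smul, Pi.norm_single,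
      norm_one, mul_one, Real.norm_eq_abs, abs_mul, abs_of_pos (half_pos hρ)]
    nlinarith [abs_nonneg s]
  have hcoord : ∀ i, ρ * |y i| ≤ widthDir C y := by
    intro i
    have key : ∀ s : ℝ, |s| ≤ 1 → ρ * s * y i ≤ widthDir C y := by
      intro s hs
      have hle := dot_sub_le_widthDir (y := y) hC (hmem i s hs) (hmem i (-s) (by rwa [abs_neg]))
      convert hle using 1
      rw [dot_eq_dotProduct, add_sub_add_left_eq_sub, ← sub_smul, dotProduct_smul,
        dotProduct_single, smul_eq_mul]
      ring
    rcases abs_cases (y i) with ⟨h, -⟩ | ⟨h, -⟩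
    · simpa [h] using key 1 (by simp)
    · simpa [h] using key (-1) (by simp)
  rw [mul_comm, ← le_div_iff₀ hρ]
  refine (pi_norm_le_iff_of_nonneg (div_nonneg (widthDir_nonneg C y) hρ.le)).mpr fun i => ?_
  rw [Real.norm_eq_abs, le_div_iff₀ hρ, mul_comm]
  exact hcoord i

lemma widthDir_le_of_dot_sub_eq_zero (hC : IsCompact C) (hne : C.Nonempty) {u : Fin d → ℝ}
    (hu : ∀ a ∈ C, ∀ b ∈ C, dot u (a - b) = 0) (y : Fin d → ℝ) (m : ℝ) :
    widthDir C y ≤ d * (‖y - m • u‖ * Metric.diam C) := by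
  refine widthDir_le hne fun a ha b hb => ?_
  have hsplit : dot y (a - b) = dot (y - m • u) (a - b) := by
    have := hu a ha b hb
    simp only [dot_eq_dotProduct, sub_dotProduct, smul_dotProduct, smul_eq_mul] at this ⊢
    rw [this, mul_zero, sub_zero]
  calc dot y (a - b) ≤ |dot (y - m • u) (a - b)| := hsplit ▸ le_abs_self _
    _ ≤ d * (‖y - m • u‖ * ‖a - b‖) := abs_dot_le _ _
    _ ≤ d * (‖y - m • u‖ * Metric.diam C) := by
        rw [← dist_eq_norm]
        gcongr
        exact Metric.dist_le_diam_of_mem hC.isBounded ha hb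

lemma latticeWidth_le_widthDir (hy : y ∈ dualLattice L) (hy0 : y ≠ 0) :
    latticeWidth C L ≤ widthDir C y :=
  csInf_le ⟨0, by rintro _ ⟨y, -, -, rfl⟩; exact widthDir_nonneg C y⟩ ⟨y, hy, hy0, rfl⟩

lemma le_latticeWidth (hL : ∃ y ∈ dualLattice L, y ≠ 0) {w : ℝ}
    (h : ∀ y ∈ dualLattice L, y ≠ 0 → w ≤ widthDir C y) : w ≤ latticeWidth C L := by
  obtain ⟨y₀, hy₀, hy₀0⟩ := hL
  exact le_csInf ⟨_, y₀, hy₀, hy₀0, rfl⟩ fun _ ⟨y, hy, hy0, hr⟩ => hr ▸ h y hy hy0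

end Width

section Lattice
variable {d : ℕ}

lemma IsLattice.exists_dualLattice_eq_span {L : Set (Fin d → ℝ)} (hL : IsLattice L) :
    ∃ b : Module.Basis (Fin d) ℝ (Fin d → ℝ), dualLattice L = span ℤ (range b) := by
  classical
  obtain ⟨B, rfl⟩ := hL
  have hspan : range (fun z : Fin d → ℤ => ∑ i, (z i : ℝ) • B i) = span ℤ (range B) := by
    ext x
    simp only [mem_range, SetLike.mem_coe, mem_span_range_iff_exists_fun, Int.cast_smul_eq_zsmul]
  let β : LinearMap.BilinForm ℝ (Fin d → ℝ) := dotProductBilin ℝ ℝ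
  have hβ : β.Nondegenerate :=
    ⟨fun x hx => dotProduct_self_eq_zero.mp (hx x),
      fun x hx => dotProduct_self_eq_zero.mp (hx x)⟩
  refine ⟨β.dualBasis hβ B, ?_⟩
  rw [← β.dualSubmodule_span_of_basis (R := ℤ) hβ B, hspan]
  ext y
  simp only [dualLattice, mem_ofPred_eq, SetLike.mem_coe, LinearMap.BilinForm.mem_dualSubmodule,
    Submodule.mem_one]
  refine forall₂_congr fun x _ => exists_congr fun n => ?_
  rw [algebraMap_int_eq, eq_intCast, eq_comm, dot_comm]
  rfl

end Lattice

section ZSpan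
variable {E ι : Type*} [NormedAddCommGroup E] [NormedSpace ℝ E] [Fintype ι]

/-- Dirichlet's argument: the fractional parts of the multiples `n • u` lie in a bounded set, so
two of them are `ε`-close. -/
lemma exists_ne_zero_mem_span_near_line (b : Module.Basis ι ℝ E) {u : E} (hu : u ≠ 0) {ε : ℝ}
    (hε : 0 < ε) : ∃ y ∈ span ℤ (range b), y ≠ 0 ∧ ∃ m : ℝ, ‖y - m • u‖ < ε := by
  have : FiniteDimensional ℝ E := Module.Finite.of_basis b
  set δ := min ε ‖u‖
  have hδ : 0 < δ := lt_min hε (norm_pos_iff.mpr hu)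
  let x : ℕ → E := fun n => ZSpan.fract b ((n : ℝ) • u)
  obtain ⟨_, -, φ, hφ, hlim⟩ :=
    (ZSpan.fundamentalDomain_isBounded b).isCompact_closure.tendsto_subseq (x := x)
      fun n => subset_closure (ZSpan.fract_mem_fundamentalDomain b _)
  obtain ⟨N, hN⟩ := Metric.cauchySeq_iff'.mp hlim.cauchySeq δ hδ
  have hlt : φ N < φ (N + 1) := hφ N.lt_succ_self
  set m : ℝ := (φ (N + 1) : ℝ) - φ N
  have hm : 1 ≤ m := by
    have : ((φ N : ℕ) : ℝ) + 1 ≤ φ (N + 1) := by exact_mod_cast hlt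
    linarith
  set y : E := ZSpan.floor b ((φ (N + 1) : ℝ) • u) - ZSpan.floor b ((φ N : ℝ) • u)
  have hy : y - m • u = x (φ N) - x (φ (N + 1)) := by
    simp only [x, y, m, ZSpan.fract_apply, sub_smul]
    abel
  have hclose : ‖y - m • u‖ < δ := by
    rw [hy, ← dist_eq_norm, dist_comm]
    exact hN (N + 1) N.le_succ
  refine ⟨y, sub_mem (ZSpan.floor b _).2 (ZSpan.floor b _).2, fun hy0 => ?_, m,
    hclose.trans_le (min_le_left _ _)⟩
  have : m * ‖u‖ < ‖u‖ := by
    rw [hy0, zero_sub, norm_neg, norm_smul, Real.norm_of_nonneg (by linarith)] at hclose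
    exact hclose.trans_le (min_le_right _ _)
  nlinarith [norm_nonneg u]

end ZSpan

section LatticeWidth
variable {d : ℕ} {ι : Type*} [Fintype ι] {C L : Set (Fin d → ℝ)}

/-- A flat body is thin in some lattice direction: lattice vectors `y` nearly parallel to its
normal `u` have small width. -/
lemma interior_nonempty_of_le_widthDir (b : Module.Basis ι ℝ (Fin d → ℝ)) (hC : IsCompact C)
    (hconv : Convex ℝ C) (hne : C.Nonempty) {w : ℝ} (hw : 0 < w)
    (h : ∀ y ∈ span ℤ (range b), y ≠ 0 → w ≤ widthDir C y) : (interior C).Nonempty := by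
  by_contra hint
  have hV : vectorSpan ℝ C < ⊤ := by
    rw [lt_top_iff_ne_top, Ne, ← AffineSubspace.affineSpan_eq_top_iff_vectorSpan_eq_top_of_nonempty
      ℝ _ _ hne, ← hconv.interior_nonempty_iff_affineSpan_eq_top]
    exact hint
  obtain ⟨f, hf0, hVf⟩ := Submodule.exists_le_ker_of_lt_top _ hV
  obtain ⟨u, hu⟩ := exists_dot_eq_apply f
  have hu0 : u ≠ 0 := by
    rintro rfl
    exact hf0 (LinearMap.ext fun x => by simp [hu, dot_eq_dotProduct])
  have horth : ∀ a ∈ C, ∀ b ∈ C, dot u (a - b) = 0 := fun a ha b hb =>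
    (hu _).symm.trans (hVf (vsub_mem_vectorSpan ℝ ha hb))
  set D := d * Metric.diam C
  have hD : 0 ≤ D := mul_nonneg d.cast_nonneg Metric.diam_nonneg
  obtain ⟨y, hy, hy0, m, hym⟩ :=
    exists_ne_zero_mem_span_near_line b hu0 (div_pos hw (by linarith : 0 < D + 1))
  have hthin : widthDir C y < w :=
    calc widthDir C y ≤ d * (‖y - m • u‖ * Metric.diam C) :=
          widthDir_le_of_dot_sub_eq_zero hC hne horth y m
      _ = ‖y - m • u‖ * D := by ring
      _ ≤ w / (D + 1) * D := by gcongr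
      _ < w := by
          rw [div_mul_eq_mul_div, div_lt_iff₀ (by linarith)]
          linarith
  exact (h y hy hy0).not_gt hthin

lemma exists_mul_norm_le_widthDir (hC : IsCompact C) (hint : (interior C).Nonempty) :
    ∃ ρ > 0, ∀ y, ρ * ‖y‖ ≤ widthDir C y := by
  obtain ⟨x, hx⟩ := hint
  obtain ⟨ρ, hρ, hball⟩ := Metric.isOpen_iff.mp isOpen_interior x hx
  exact ⟨ρ, hρ, mul_norm_le_widthDir hC hρ (hball.trans interior_subset)⟩

lemma finite_setOf_widthDir_le (b : Module.Basis ι ℝ (Fin d → ℝ)) (hC : IsCompact C)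
    (hint : (interior C).Nonempty) (c : ℝ) :
    {y | y ∈ span ℤ (range b) ∧ widthDir C y ≤ c}.Finite := by
  obtain ⟨ρ, hρ, hwidth⟩ := exists_mul_norm_le_widthDir hC hint
  refine (ZSpan.setFinite_inter b (Metric.isBounded_closedBall (x := 0) (r := c / ρ))).subset ?_
  rintro y ⟨hy, hyc⟩
  refine ⟨?_, hy⟩
  rw [mem_closedBall_zero_iff, le_div_iff₀ hρ, mul_comm]
  exact (hwidth y).trans hyc

lemma exists_isWidthDirection (hfin : ∀ c, {y | y ∈ dualLattice L ∧ widthDir C y ≤ c}.Finite)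
    (hL : ∃ y ∈ dualLattice L, y ≠ 0) : ∃ y, IsWidthDirection C L y := by
  obtain ⟨y₀, hy₀, hy₀0⟩ := hL
  obtain ⟨y, ⟨⟨hy, -⟩, hy0⟩, hmin⟩ :=
    Set.exists_min_image {y | (y ∈ dualLattice L ∧ widthDir C y ≤ widthDir C y₀) ∧ y ≠ 0}
      (widthDir C) ((hfin _).subset fun y hy => hy.1) ⟨y₀, ⟨hy₀, le_rfl⟩, hy₀0⟩
  refine ⟨y, hy, hy0, le_antisymm (le_latticeWidth ⟨y, hy, hy0⟩ fun y' hy' hy'0 => ?_)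
    (latticeWidth_le_widthDir hy hy0)⟩
  by_cases hy'y₀ : widthDir C y' ≤ widthDir C y₀
  · exact hmin y' ⟨⟨hy', hy'y₀⟩, hy'0⟩
  · exact (hmin y₀ ⟨⟨hy₀, le_rfl⟩, hy₀0⟩).trans (not_le.mp hy'y₀).le

lemma latticeWidth_pos (b : Module.Basis ι ℝ (Fin d → ℝ)) (hb : dualLattice L = span ℤ (range b))
    (hL : ∃ y ∈ dualLattice L, y ≠ 0) (hC : IsConvexBody C) : 0 < latticeWidth C L := by
  obtain ⟨ρ, hρ, hwidth⟩ := exists_mul_norm_le_widthDir hC.2.1 hC.2.2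
  obtain ⟨y, -, hy0, hyw⟩ := exists_isWidthDirection
    (fun c => by rw [hb]; exact finite_setOf_widthDir_le b hC.2.1 hC.2.2 c) hL
  rw [← hyw]
  exact (mul_pos hρ (norm_pos_iff.2 hy0)).trans_le (hwidth y)

end LatticeWidth

section Polytope
variable {d : ℕ} {C : Set (Fin d → ℝ)}

lemma IsPolytope.finite_extremePoints (hC : IsPolytope C) : (extremePoints ℝ C).Finite := by
  obtain ⟨V, rfl⟩ := hC
  exact V.finite_toSet.subset extremePoints_convexHull_subset

lemma IsPolytope.convexHull_extremePoints (hC : IsPolytope C) :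
    convexHull ℝ (extremePoints ℝ C) = C := by
  obtain ⟨V, rfl⟩ := id hC
  rw [← (hC.finite_extremePoints.isCompact_convexHull ℝ).isClosed.closure_eq]
  exact closure_convexHull_extremePoints (V.finite_toSet.isCompact_convexHull ℝ)
    (convex_convexHull ℝ _)

lemma ncard_extremePoints_convexHull_range_le {ι : Type*} [Finite ι] (q : ι → Fin d → ℝ) :
    (extremePoints ℝ (convexHull ℝ (range q))).ncard ≤ Nat.card ι :=
  calc (extremePoints ℝ (convexHull ℝ (range q))).ncard ≤ (range q).ncard :=
        ncard_le_ncard extremePoints_convexHull_subset (finite_range q)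
    _ ≤ Nat.card ι := by
        rw [← image_univ, ← ncard_univ]
        exact ncard_image_le finite_univ

end Polytope

section Tuples
variable {d : ℕ} {ι : Type*} [Fintype ι] [Nonempty ι] {q q' : ι → Fin d → ℝ} {y : Fin d → ℝ}

def maxDot (y : Fin d → ℝ) (q : ι → Fin d → ℝ) : ℝ :=
  Finset.univ.sup' Finset.univ_nonempty fun e => dot y (q e)

lemma dot_le_maxDot (y : Fin d → ℝ) (q : ι → Fin d → ℝ) (e : ι) : dot y (q e) ≤ maxDot y q :=
  Finset.le_sup' (fun e => dot y (q e)) (Finset.mem_univ e)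

lemma exists_dot_eq_maxDot (y : Fin d → ℝ) (q : ι → Fin d → ℝ) : ∃ e, dot y (q e) = maxDot y q :=
  let ⟨e, _, he⟩ := Finset.exists_mem_eq_sup' Finset.univ_nonempty fun e => dot y (q e)
  ⟨e, he.symm⟩

lemma dot_le_maxDot_of_mem_convexHull {x : Fin d → ℝ} (hx : x ∈ convexHull ℝ (range q)) :
    dot y x ≤ maxDot y q :=
  convexHull_min (range_subset_iff.2 (dot_le_maxDot y q)) (convex_dot_le y _) hx

lemma maxDot_le_of_range_subset (h : range q' ⊆ convexHull ℝ (range q)) :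
    maxDot y q' ≤ maxDot y q :=
  Finset.sup'_le _ _ fun e _ => dot_le_maxDot_of_mem_convexHull (h ⟨e, rfl⟩)

lemma eq_of_mem_convexHull_of_dot_eq {s : Set (Fin d → ℝ)} {M : ℝ} {x v : Fin d → ℝ}
    (hs : ∀ p ∈ s, dot y p ≤ M) (hsv : ∀ p ∈ s, dot y p = M → p = v)
    (hx : x ∈ convexHull ℝ s) (hxM : dot y x = M) : x = v := by
  obtain ⟨κ, _, w, p, hw₀, hw₁, hp, rfl⟩ := mem_convexHull_iff_exists_fintype.mp hx
  have hzero : ∑ i, w i * (M - dot y (p i)) = 0 := by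
    simp only [dot_eq_dotProduct, dotProduct_sum, dotProduct_smul, smul_eq_mul] at hxM ⊢
    simp only [mul_sub, Finset.sum_sub_distrib, ← Finset.sum_mul, hw₁, one_mul, hxM, sub_self]
  have hterm := (Finset.sum_eq_zero_iff_of_nonneg fun i _ =>
    mul_nonneg (hw₀ i) (sub_nonneg.2 (hs _ (hp i)))).mp hzero
  have hsmul : ∀ i, w i • p i = w i • v := fun i => by
    rcases mul_eq_zero.mp (hterm i (Finset.mem_univ i)) with h | h
    · simp [h]
    · rw [hsv _ (hp i) (by linarith)]
  rw [Finset.sum_congr rfl fun i _ => hsmul i, ← Finset.sum_smul, hw₁, one_smul]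

lemma exists_ne_dot_eq_maxDot {a v : Fin d → ℝ} (ha : a ∈ convexHull ℝ (range q)) (hav : a ≠ v)
    (haM : dot y a = maxDot y q) : ∃ e, q e ≠ v ∧ dot y (q e) = maxDot y q := by
  by_contra! h
  refine hav (eq_of_mem_convexHull_of_dot_eq ?_ ?_ ha haM)
  · rintro _ ⟨e, rfl⟩
    exact dot_le_maxDot y q e
  · rintro _ ⟨e, rfl⟩ he
    by_contra hne
    exact h e hne he

lemma widthDir_convexHull_range (y : Fin d → ℝ) (q : ι → Fin d → ℝ) :
    widthDir (convexHull ℝ (range q)) y = maxDot y q + maxDot (-y) q := by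
  apply le_antisymm
  · refine widthDir_le ((range_nonempty q).mono (subset_convexHull ℝ _)) fun a ha b hb => ?_
    rw [dot_sub_eq_add_dot_neg]
    exact add_le_add (dot_le_maxDot_of_mem_convexHull ha) (dot_le_maxDot_of_mem_convexHull hb)
  · obtain ⟨e₁, he₁⟩ := exists_dot_eq_maxDot y q
    obtain ⟨e₂, he₂⟩ := exists_dot_eq_maxDot (-y) q
    rw [← he₁, ← he₂, ← dot_sub_eq_add_dot_neg]
    exact dot_sub_le_widthDir ((finite_range q).isCompact_convexHull ℝ)
      (subset_convexHull ℝ _ ⟨e₁, rfl⟩) (subset_convexHull ℝ _ ⟨e₂, rfl⟩)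

lemma continuous_maxDot :
    Continuous fun p : (Fin d → ℝ) × (ι → Fin d → ℝ) => maxDot p.1 p.2 :=
  Continuous.finset_sup'_apply _ fun e _ =>
    continuous_dot.comp (continuous_fst.prodMk ((continuous_apply e).comp continuous_snd))

lemma exists_maxDot_lt_dot {v : Fin d → ℝ} (hv : v ∉ convexHull ℝ (range q)) :
    ∃ y, maxDot y q < dot y v := by
  obtain ⟨f, s, hfs, hsv⟩ := geometric_hahn_banach_closed_point (convex_convexHull ℝ _)
    ((finite_range q).isCompact_convexHull ℝ).isClosed hv
  obtain ⟨y, hy⟩ := exists_dot_eq_apply f.toLinearMap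
  obtain ⟨e, he⟩ := exists_dot_eq_maxDot y q
  refine ⟨y, ?_⟩
  rw [← he, ← hy, ← hy]
  exact (hfs _ (subset_convexHull ℝ _ ⟨e, rfl⟩)).trans hsv

end Tuples

section SupportSeries
variable {d : ℕ} {ι : Type*} [Fintype ι] [Nonempty ι] {q q' : ι → Fin d → ℝ}

open TopologicalSpace in
/-- Sampling the support function along a dense sequence of directions gives a continuous
functional on tuples that strictly decreases when the hull strictly shrinks. -/
def supportSeries (q : ι → Fin d → ℝ) : ℝ :=
  ∑' n, (1 / 2 : ℝ) ^ n * Real.arctan (maxDot (denseSeq (Fin d → ℝ) n) q)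

lemma norm_geometric_mul_arctan_le (n : ℕ) (x : ℝ) :
    ‖(1 / 2 : ℝ) ^ n * Real.arctan x‖ ≤ (1 / 2 : ℝ) ^ n * 2 := by
  rw [norm_mul, norm_pow, Real.norm_of_nonneg (by norm_num : (0 : ℝ) ≤ 1 / 2)]
  gcongr
  rw [Real.norm_eq_abs, abs_le]
  constructor <;> linarith [Real.arctan_lt_pi_div_two x, Real.neg_pi_div_two_lt_arctan x,
    Real.pi_lt_four]

lemma summable_geometric_mul_arctan (f : ℕ → ℝ) :
    Summable fun n => (1 / 2 : ℝ) ^ n * Real.arctan (f n) :=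
  ((summable_geometric_two).mul_right 2).of_norm_bounded fun n => norm_geometric_mul_arctan_le n _

lemma continuous_supportSeries : Continuous (supportSeries : (ι → Fin d → ℝ) → ℝ) :=
  continuous_tsum (fun _ => continuous_const.mul (Real.continuous_arctan.comp
    (continuous_maxDot.comp (continuous_const.prodMk continuous_id))))
    ((summable_geometric_two).mul_right 2) fun n _ => norm_geometric_mul_arctan_le n _

lemma supportSeries_lt (h : range q' ⊆ convexHull ℝ (range q)) {v : Fin d → ℝ}
    (hv : v ∈ convexHull ℝ (range q)) (hv' : v ∉ convexHull ℝ (range q')) :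
    supportSeries q' < supportSeries q := by
  have hopen : IsOpen {y | maxDot y q' < maxDot y q} :=
    isOpen_lt (continuous_maxDot.comp (continuous_id.prodMk continuous_const))
      (continuous_maxDot.comp (continuous_id.prodMk continuous_const))
  obtain ⟨y, hy⟩ := exists_maxDot_lt_dot hv'
  obtain ⟨n, hn⟩ := (TopologicalSpace.denseRange_denseSeq _).exists_mem_open hopen
    ⟨y, hy.trans_le (dot_le_maxDot_of_mem_convexHull hv)⟩
  refine Summable.tsum_lt_tsum (i := n) (fun m => ?_) ?_ (summable_geometric_mul_arctan _)
    (summable_geometric_mul_arctan _)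
  · gcongr
    exact maxDot_le_of_range_subset h
  · gcongr
    exact hn

end SupportSeries

section MoveVertex
variable {d : ℕ} {ι : Type*} {q : ι → Fin d → ℝ} {v z y : Fin d → ℝ} {t : ℝ}

def moveVertex (q : ι → Fin d → ℝ) (v z : Fin d → ℝ) (t : ℝ) : ι → Fin d → ℝ :=
  fun e => if q e = v then v + t • (z - v) else q e

lemma range_moveVertex_subset (hz : z ∈ convexHull ℝ (range q)) (ht₀ : 0 ≤ t) (ht₁ : t ≤ 1) :
    range (moveVertex q v z t) ⊆ convexHull ℝ (range q) := by
  rintro _ ⟨e, rfl⟩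
  unfold moveVertex
  split_ifs with he
  · exact (convex_convexHull ℝ _).add_smul_sub_mem (he ▸ subset_convexHull ℝ _ ⟨e, rfl⟩) hz
      ⟨ht₀, ht₁⟩
  · exact subset_convexHull ℝ _ ⟨e, rfl⟩

lemma notMem_convexHull_moveVertex (hv : v ∈ extremePoints ℝ (convexHull ℝ (range q)))
    (hz : z ∈ convexHull ℝ (range q)) (hzv : z ≠ v) (ht₀ : 0 < t) (ht₁ : t ≤ 1) :
    v ∉ convexHull ℝ (range (moveVertex q v z t)) := by
  intro hv'
  have hsub := convexHull_min (range_moveVertex_subset (v := v) hz ht₀.le ht₁)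
    (convex_convexHull ℝ _)
  obtain ⟨e, he⟩ := extremePoints_convexHull_subset
    (inter_extremePoints_subset_extremePoints_of_subset hsub ⟨hv', hv⟩)
  unfold moveVertex at he
  split_ifs at he with hqe
  · rw [add_eq_left, smul_eq_zero, sub_eq_zero] at he
    exact he.elim ht₀.ne' hzv
  · exact hqe he

variable [Fintype ι] [Nonempty ι]

lemma maxDot_sub_mul_le_maxDot_moveVertex (hz : z ∈ convexHull ℝ (range q)) (ht₀ : 0 ≤ t) :
    maxDot y q - t * (maxDot y q + maxDot (-y) q) ≤ maxDot y (moveVertex q v z t) := by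
  obtain ⟨e, he⟩ := exists_dot_eq_maxDot y q
  refine le_trans ?_ (dot_le_maxDot y _ e)
  unfold moveVertex
  split_ifs with hqe
  · have hz' : -dot y z ≤ maxDot (-y) q := by
      simpa [dot_eq_dotProduct] using dot_le_maxDot_of_mem_convexHull (y := -y) hz
    have hmove : dot y (v + t • (z - v)) = dot y v + t * (dot y z - dot y v) := by
      simp only [dot_eq_dotProduct, dotProduct_add, dotProduct_smul, dotProduct_sub, smul_eq_mul]
    rw [hmove, ← hqe, he]
    nlinarith
  · rw [he]
    exact sub_le_self _ (mul_nonneg ht₀ (widthDir_convexHull_range y q ▸ widthDir_nonneg _ y))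

lemma maxDot_le_maxDot_moveVertex {e : ι} (hqe : q e ≠ v) (he : dot y (q e) = maxDot y q) :
    maxDot y q ≤ maxDot y (moveVertex q v z t) := by
  refine he ▸ le_trans (le_of_eq ?_) (dot_le_maxDot y _ e)
  simp [moveVertex, hqe]

lemma mul_widthDir_le_widthDir_moveVertex (hz : z ∈ convexHull ℝ (range q)) (ht₀ : 0 ≤ t) :
    (1 - 2 * t) * widthDir (convexHull ℝ (range q)) y ≤
      widthDir (convexHull ℝ (range (moveVertex q v z t))) y := by
  rw [widthDir_convexHull_range, widthDir_convexHull_range]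
  have h₁ := maxDot_sub_mul_le_maxDot_moveVertex (y := y) (v := v) hz ht₀
  have h₂ := maxDot_sub_mul_le_maxDot_moveVertex (y := -y) (v := v) hz ht₀
  rw [neg_neg] at h₂
  linarith

/-- If a body `C ∌ v` inside the hull is as wide as the hull in direction `y`, both supporting
hyperplanes touch the hull at tuple points other than `v`, which `moveVertex` leaves in place. -/
lemma widthDir_le_widthDir_moveVertex {C : Set (Fin d → ℝ)} (hC : IsCompact C) (hne : C.Nonempty)
    (hCQ : C ⊆ convexHull ℝ (range q)) (hvC : v ∉ C)
    (hle : widthDir (convexHull ℝ (range q)) y ≤ widthDir C y) :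
    widthDir (convexHull ℝ (range q)) y ≤
      widthDir (convexHull ℝ (range (moveVertex q v z t))) y := by
  obtain ⟨a, ha, b, hb, hab⟩ := exists_widthDir_eq hC hne y
  rw [widthDir_convexHull_range, hab, dot_sub_eq_add_dot_neg] at hle
  rw [widthDir_convexHull_range, widthDir_convexHull_range]
  have ha' := dot_le_maxDot_of_mem_convexHull (y := y) (hCQ ha)
  have hb' := dot_le_maxDot_of_mem_convexHull (y := -y) (hCQ hb)
  obtain ⟨e₁, he₁v, he₁⟩ :=
    exists_ne_dot_eq_maxDot (hCQ ha) (ne_of_mem_of_not_mem ha hvC) (by linarith)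
  obtain ⟨e₂, he₂v, he₂⟩ :=
    exists_ne_dot_eq_maxDot (hCQ hb) (ne_of_mem_of_not_mem hb hvC) (by linarith)
  linarith [maxDot_le_maxDot_moveVertex (z := z) (t := t) he₁v he₁,
    maxDot_le_maxDot_moveVertex (z := z) (t := t) he₂v he₂]

end MoveVertex

lemma exists_pos_le_one_sub_two_mul {α : Type*} {S : Set α} {W : α → ℝ} {w : ℝ} (hw : 0 ≤ w)
    (hfin : {y | y ∈ S ∧ W y < w + 1}.Finite) :
    ∃ t, 0 < t ∧ t ≤ 1 ∧ ∀ y ∈ S, w < W y → w ≤ (1 - 2 * t) * W y := by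
  obtain ⟨ε, hε, hεW⟩ : ∃ ε > 0, ∀ y ∈ S, w < W y → W y < w + 1 → ε ≤ W y - w := by
    set F := {y | y ∈ S ∧ w < W y ∧ W y < w + 1}
    have hF : F.Finite := hfin.subset fun y hy => ⟨hy.1, hy.2.2⟩
    rcases F.eq_empty_or_nonempty with hF0 | hFne
    · exact ⟨1, one_pos, fun y hy h₁ h₂ => (hF0.subset (⟨hy, h₁, h₂⟩ : y ∈ F)).elim⟩
    · obtain ⟨y₀, hy₀, hmin⟩ := Set.exists_min_image F (fun y => W y - w) hF hFne
      exact ⟨W y₀ - w, sub_pos.2 hy₀.2.1, fun y hy h₁ h₂ => hmin y ⟨hy, h₁, h₂⟩⟩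
  set δ := min ε 1
  have hδ : 0 < δ := lt_min hε one_pos
  have h2t : 2 * (δ / (2 * (w + 1))) * (w + 1) = δ := by field_simp
  refine ⟨δ / (2 * (w + 1)), by positivity, ?_, fun y hy hwy => ?_⟩
  · rw [div_le_one (by positivity)]
    linarith [min_le_right ε 1]
  rcases lt_or_ge (W y) (w + 1) with hW | hW
  · have := hεW y hy hwy hW
    nlinarith [min_le_left ε 1]
  · nlinarith [min_le_right ε 1]

lemma exists_supportSeries_lt {d : ℕ} {ι : Type*} [Fintype ι] [Nonempty ι] {q : ι → Fin d → ℝ}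
    {S : Set (Fin d → ℝ)} {w : ℝ} (hw : 0 ≤ w)
    (hfin : {y | y ∈ S ∧ widthDir (convexHull ℝ (range q)) y < w + 1}.Finite)
    {C : Set (Fin d → ℝ)} (hC : IsConvexBody C) (hCQ : C ⊂ convexHull ℝ (range q))
    (hCw : ∀ y ∈ S, w ≤ widthDir C y) :
    ∃ q' : ι → Fin d → ℝ, range q' ⊆ convexHull ℝ (range q) ∧
      (∀ y ∈ S, w ≤ widthDir (convexHull ℝ (range q')) y) ∧ supportSeries q' < supportSeries q := by
  obtain ⟨hCconv, hCcomp, hCint⟩ := hC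
  have hQcomp : IsCompact (convexHull ℝ (range q)) := (finite_range q).isCompact_convexHull ℝ
  obtain ⟨v, hvQ, hvC⟩ : ∃ v ∈ extremePoints ℝ (convexHull ℝ (range q)), v ∉ C := by
    by_contra! h
    refine hCQ.not_subset ?_
    rw [← closure_convexHull_extremePoints hQcomp (convex_convexHull ℝ _)]
    exact closure_minimal (convexHull_min h hCconv) hCcomp.isClosed
  obtain ⟨z, hz⟩ := hCint.mono interior_subset
  have hzQ := hCQ.subset hz
  obtain ⟨t, ht₀, ht₁, hslack⟩ := exists_pos_le_one_sub_two_mul hw hfin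
  have hrange := range_moveVertex_subset (v := v) hzQ ht₀.le ht₁
  refine ⟨moveVertex q v z t, hrange, fun y hy => ?_, supportSeries_lt hrange hvQ.1
    (notMem_convexHull_moveVertex hvQ hzQ (ne_of_mem_of_not_mem hz hvC) ht₀ ht₁)⟩
  rcases le_or_gt (widthDir (convexHull ℝ (range q)) y) (widthDir C y) with hle | hlt
  · exact ((hCw y hy).trans (widthDir_mono hQcomp ⟨z, hz⟩ hCQ.subset y)).trans
      (widthDir_le_widthDir_moveVertex hCcomp ⟨z, hz⟩ hCQ.subset hvC hle)
  · exact (hslack y hy ((hCw y hy).trans_lt hlt)).trans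
      (mul_widthDir_le_widthDir_moveVertex hzQ ht₀.le)

section WideTuples
variable {d : ℕ} {ι : Type*} {P L : Set (Fin d → ℝ)} {w : ℝ} {q : ι → Fin d → ℝ}

def wideTuples (P L : Set (Fin d → ℝ)) (w : ℝ) : Set (ι → Fin d → ℝ) :=
  {q | (∀ e, q e ∈ P) ∧ ∀ y ∈ dualLattice L, y ≠ 0 → w ≤ widthDir (convexHull ℝ (range q)) y}

lemma isCompact_wideTuples [Fintype ι] [Nonempty ι] (hP : IsCompact P) :
    IsCompact (wideTuples (ι := ι) P L w) := by
  have hclosed : IsClosed (wideTuples (ι := ι) P L w) := by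
    simp only [wideTuples, widthDir_convexHull_range, ofPred_and, ofPred_forall]
    refine (isClosed_iInter fun e => hP.isClosed.preimage (continuous_apply e)).inter
      (isClosed_iInter fun y => isClosed_iInter fun _ => isClosed_iInter fun _ =>
        isClosed_le continuous_const ?_)
    exact (continuous_maxDot.comp (continuous_const.prodMk continuous_id)).add
      (continuous_maxDot.comp (continuous_const.prodMk continuous_id))
  exact (isCompact_univ_pi fun _ => hP).of_isClosed_subset hclosed fun q hq => mem_univ_pi.2 hq.1

lemma coe_extremePoints_mem_wideTuples (hP : IsPolytope P) :
    ((↑) : extremePoints ℝ P → Fin d → ℝ) ∈ wideTuples P L (latticeWidth P L) := by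
  refine ⟨fun e => extremePoints_subset e.2, fun y hy hy0 => ?_⟩
  rw [Subtype.range_coe, hP.convexHull_extremePoints]
  exact latticeWidth_le_widthDir hy hy0

lemma isConvexBody_convexHull_of_mem_wideTuples [Finite ι] [Nonempty ι]
    {b : Module.Basis (Fin d) ℝ (Fin d → ℝ)}
    (hb : dualLattice L = span ℤ (range b)) (hw : 0 < w) (hq : q ∈ wideTuples P L w) :
    IsConvexBody (convexHull ℝ (range q)) := by
  have hcomp := (finite_range q).isCompact_convexHull ℝ
  refine ⟨convex_convexHull ℝ _, hcomp, interior_nonempty_of_le_widthDir b hcomp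
    (convex_convexHull ℝ _) ((range_nonempty q).mono (subset_convexHull ℝ _)) hw ?_⟩
  exact fun y hy => hq.2 y (by rw [hb]; exact hy)

lemma latticeWidth_convexHull_of_mem_wideTuples [Nonempty ι] (hPconv : Convex ℝ P)
    (hP : IsCompact P) (hL : ∃ y ∈ dualLattice L, y ≠ 0)
    (hq : q ∈ wideTuples P L (latticeWidth P L)) :
    latticeWidth (convexHull ℝ (range q)) L = latticeWidth P L := by
  have hQP : convexHull ℝ (range q) ⊆ P := convexHull_min (range_subset_iff.2 hq.1) hPconv
  refine le_antisymm (le_latticeWidth hL fun y hy hy0 => ?_) (le_latticeWidth hL hq.2)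
  exact (latticeWidth_le_widthDir hy hy0).trans
    (widthDir_mono hP ((range_nonempty q).mono (subset_convexHull ℝ _)) hQP y)

lemma isLatticeReduced_of_isMinOn [Fintype ι] [Nonempty ι] (hP : Convex ℝ P)
    {b : Module.Basis (Fin d) ℝ (Fin d → ℝ)} (hb : dualLattice L = span ℤ (range b)) (hw : 0 < w)
    (hq : q ∈ wideTuples P L w) (hmin : IsMinOn supportSeries (wideTuples P L w) q)
    (hwq : latticeWidth (convexHull ℝ (range q)) L = w) :
    IsLatticeReduced (convexHull ℝ (range q)) L := by
  have hQ := isConvexBody_convexHull_of_mem_wideTuples hb hw hq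
  refine ⟨hQ, fun C hC hCQ hCw => ?_⟩
  have hfin : {y | y ∈ {y | y ∈ dualLattice L ∧ y ≠ 0} ∧
      widthDir (convexHull ℝ (range q)) y < w + 1}.Finite :=
    (finite_setOf_widthDir_le b hQ.2.1 hQ.2.2 (w + 1)).subset
      fun y ⟨⟨hy, _⟩, hlt⟩ => ⟨(SetLike.mem_coe).1 (hb ▸ hy), hlt.le⟩
  obtain ⟨q', hq'Q, hq'w, hlt⟩ := exists_supportSeries_lt hw.le hfin hC hCQ
    fun y ⟨hy, hy0⟩ => hwq ▸ hCw ▸ latticeWidth_le_widthDir hy hy0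
  have hQP : convexHull ℝ (range q) ⊆ P := convexHull_min (range_subset_iff.2 hq.1) hP
  exact (hmin ⟨fun e => hQP (hq'Q ⟨e, rfl⟩), fun y hy hy0 => hq'w y ⟨hy, hy0⟩⟩).not_gt hlt

end WideTuples

lemma isLatticeReduced_of_fin_zero {C L : Set (Fin 0 → ℝ)} (hC : IsConvexBody C) :
    IsLatticeReduced C L :=
  ⟨hC, fun _ hC' hC'C _ => hC'C.ne ((hC'.2.2.mono interior_subset).eq_univ.trans
    (hC.2.2.mono interior_subset).eq_univ.symm)⟩

/-- every full-dimensional polytope contains a lattice reduced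
full-dimensional polytope of the same lattice width with at most as many
vertices. -/
theorem exists_reduction_of_polytope {d : ℕ} (P L : Set (Fin d → ℝ))
    (hP : IsConvexBody P) (hpoly : IsPolytope P) (hL : IsLattice L) :
    ∃ Q : Set (Fin d → ℝ), Q ⊆ P ∧ IsConvexBody Q ∧ IsPolytope Q ∧
      IsLatticeReduced Q L ∧ latticeWidth Q L = latticeWidth P L ∧
      (Set.extremePoints ℝ Q).ncard ≤ (Set.extremePoints ℝ P).ncard := by
  rcases Nat.eq_zero_or_pos d with rfl | hd
  · exact ⟨P, subset_rfl, hP, hpoly, isLatticeReduced_of_fin_zero hP, rfl, le_rfl⟩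
  obtain ⟨b, hb⟩ := hL.exists_dualLattice_eq_span
  have hLne : ∃ y ∈ dualLattice L, y ≠ 0 :=
    ⟨b ⟨0, hd⟩, by rw [hb]; exact subset_span ⟨_, rfl⟩, b.ne_zero _⟩
  have hw := latticeWidth_pos b hb hLne hP
  have : Fintype (extremePoints ℝ P) := hpoly.finite_extremePoints.fintype
  have : Nonempty (extremePoints ℝ P) :=
    (hP.2.1.extremePoints_nonempty (hP.2.2.mono interior_subset)).to_subtype
  obtain ⟨q, hq, hmin⟩ := (isCompact_wideTuples hP.2.1).exists_isMinOn
    ⟨_, coe_extremePoints_mem_wideTuples hpoly⟩ continuous_supportSeries.continuousOn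
  have hwq := latticeWidth_convexHull_of_mem_wideTuples hP.1 hP.2.1 hLne hq
  exact ⟨_, convexHull_min (range_subset_iff.2 hq.1) hP.1,
    isConvexBody_convexHull_of_mem_wideTuples hb hw hq, ⟨Finset.univ.image q, by simp⟩,
    isLatticeReduced_of_isMinOn hP.1 hb hw hq hmin hwq, hwq,
    (ncard_extremePoints_convexHull_range_le q).trans_eq (Nat.card_coe_set_eq _)⟩
end
end

section
/- Let S ⊂ ℝ^d be a d-simplex that is lattice complete with respect to a full-dimensional lattice Λ. Then the lattice diameter directions of S span all of ℝ^d. -/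
open scoped Pointwise

noncomputable section

open Set Filter Topology

/-!
Let `λᵢ` be the barycentric coordinates of the simplex `S` and `ℓᵢ` their linear parts. `S`
contains a translate of the segment `[0, u]` iff `Φ u := ∑ᵢ (ℓᵢ u)⁻ ≤ 1`, so the lattice diameter
of `S` is `1 / Φ m` for a nonzero lattice vector `m` minimising `Φ`, and every lattice vector `v`
with `Φ v = Φ m` is a diameter direction. If a nonzero functional `f` vanished on all of them, write
`f = c ∑ᵢ λᵢ(p) ℓᵢ` with `c > 0` and `p` on the facet opposite a vertex `P k`; then every such `v`
has some `i` with `ℓᵢ v ≥ 0` and `λᵢ(p) > 0`. Push `p` slightly beyond that facet, to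
`x = P k + (1 + η) (p - P k)`. In `conv (S ∪ {x})` the chords along these `v` are no longer than
in `S`, while the other lattice directions have `Φ` at least `(1 + η) Φ m` (the values of `Φ` on
the lattice are discrete) and their chords grow by a factor at most `1 + η`. So the lattice
diameter does not change, contradicting completeness.
-/

theorem exists_nonneg_and_pos_of_sum_mul_eq_zero {ι : Type*} {s : Finset ι} {w ψ : ι → ℝ}
    (hψ : ∀ i ∈ s, 0 ≤ ψ i) (hψ₀ : ∃ j ∈ s, ψ j ≠ 0) (h : ∑ i ∈ s, w i * ψ i = 0) :
    ∃ i ∈ s, 0 ≤ w i ∧ 0 < ψ i := by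
  by_contra! hneg
  have hterm : ∀ i ∈ s, w i * ψ i ≤ 0 := fun i hi => by
    rcases le_or_gt 0 (w i) with hw | hw
    · rw [le_antisymm (hneg i hi hw) (hψ i hi), mul_zero]
    · exact mul_nonpos_of_nonpos_of_nonneg hw.le (hψ i hi)
  obtain ⟨j, hj, hψj⟩ := hψ₀
  have hwj := (Finset.sum_eq_zero_iff_of_nonpos hterm).1 h j hj
  rcases le_or_gt 0 (w j) with hw | hw
  · exact hψj (le_antisymm (hneg j hj hw) (hψ j hj))
  · exact hψj ((mul_eq_zero.1 hwj).resolve_left hw.ne)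

namespace AffineBasis

variable {ι E : Type*} [AddCommGroup E] [Module ℝ E] (P : AffineBasis ι ℝ E)

theorem coord_add_smul (i : ι) (y u : E) (t : ℝ) :
    P.coord i (y + t • u) = P.coord i y + t * (P.coord i).linear u := by
  rw [add_comm y, ← vadd_eq_add, AffineMap.map_vadd, vadd_eq_add, LinearMap.map_smul, smul_eq_mul,
    add_comm]

theorem coord_linear_apply (i : ι) (u : E) :
    (P.coord i).linear u = P.coord i u - P.coord i 0 := by
  simpa using (P.coord i).linearMap_vsub u 0

theorem mem_convexHull_iff (x : E) : x ∈ convexHull ℝ (range P) ↔ ∀ i, 0 ≤ P.coord i x := by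
  rw [P.convexHull_eq_nonneg_coord]; rfl

theorem coord_lineMap (i : ι) (q p : E) (c : ℝ) :
    P.coord i (AffineMap.lineMap q p c) = (1 - c) * P.coord i q + c * P.coord i p := by
  rw [AffineMap.apply_lineMap, AffineMap.lineMap_apply_ring]

theorem exists_coord_ge_of_mem_convexHull_insert {x y : E}
    (hy : y ∈ convexHull ℝ (insert x (convexHull ℝ (range P)))) :
    ∃ s ∈ Icc (0 : ℝ) 1, ∀ i, s * P.coord i x ≤ P.coord i y := by
  refine convexHull_min (t := {y | ∃ s ∈ Icc (0 : ℝ) 1, ∀ i, s * P.coord i x ≤ P.coord i y})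
    (insert_subset ⟨1, by simp, by simp⟩ fun z hz => ⟨0, by simp, by
      simpa using (P.mem_convexHull_iff z).1 hz⟩) ?_ hy
  rintro y₁ ⟨s₁, hs₁, h₁⟩ y₂ ⟨s₂, hs₂, h₂⟩ a b ha hb hab
  refine ⟨a * s₁ + b * s₂, (convex_Icc 0 1) hs₁ hs₂ ha hb hab, fun i => ?_⟩
  rw [Convex.combo_affine_apply hab, smul_eq_mul, smul_eq_mul]
  nlinarith [mul_le_mul_of_nonneg_left (h₁ i) ha, mul_le_mul_of_nonneg_left (h₂ i) hb]

variable [Fintype ι]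

theorem sum_coord_linear (u : E) : ∑ i, (P.coord i).linear u = 0 := by
  simp only [coord_linear_apply, Finset.sum_sub_distrib, sum_coord_apply_eq_one, sub_self]

theorem sum_coord_linear_smul (u : E) : ∑ i, (P.coord i).linear u • P i = u := by
  simp only [coord_linear_apply, sub_smul, Finset.sum_sub_distrib, linear_combination_coord_eq_self,
    sub_zero]

/-- The gauge of the difference body `S - S` of the simplex `S` spanned by `P`. -/
def chordGauge (u : E) : ℝ := ∑ i, ((P.coord i).linear u)⁻

theorem chordGauge_nonneg (u : E) : 0 ≤ P.chordGauge u :=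
  Finset.sum_nonneg fun _ _ => negPart_nonneg _

theorem chordGauge_smul {t : ℝ} (ht : 0 ≤ t) (u : E) :
    P.chordGauge (t • u) = t * P.chordGauge u := by
  simp only [chordGauge, map_smul, smul_eq_mul, Finset.mul_sum, negPart_def]
  refine Finset.sum_congr rfl fun i _ => ?_
  rw [mul_max_of_nonneg _ _ ht, mul_zero, mul_neg]

theorem chordGauge_neg (u : E) : P.chordGauge (-u) = P.chordGauge u := by
  have h : ∑ i, ((P.coord i).linear u)⁺ - ∑ i, ((P.coord i).linear u)⁻ = 0 := by
    rw [← Finset.sum_sub_distrib]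
    simp only [posPart_sub_negPart]
    exact P.sum_coord_linear u
  simp only [chordGauge, map_neg, negPart_neg]
  linarith

theorem negPart_coord_linear_le_chordGauge (i : ι) (u : E) :
    ((P.coord i).linear u)⁻ ≤ P.chordGauge u :=
  Finset.single_le_sum (f := fun j => ((P.coord j).linear u)⁻) (fun _ _ => negPart_nonneg _)
    (Finset.mem_univ i)

theorem abs_coord_linear_le_chordGauge (i : ι) (u : E) :
    |(P.coord i).linear u| ≤ P.chordGauge u := by
  have h := P.negPart_coord_linear_le_chordGauge i (-u)
  rw [chordGauge_neg, map_neg] at h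
  exact abs_le.2 ⟨by linarith [neg_le_negPart ((P.coord i).linear u),
    P.negPart_coord_linear_le_chordGauge i u], by linarith [neg_le_negPart (-(P.coord i).linear u)]⟩

theorem eq_zero_of_chordGauge_eq_zero {u : E} (h : P.chordGauge u = 0) : u = 0 := by
  rw [← P.sum_coord_linear_smul u]
  refine Finset.sum_eq_zero fun i _ => ?_
  have hi := P.abs_coord_linear_le_chordGauge i u
  rw [h] at hi
  rw [abs_nonpos_iff.1 hi, zero_smul]

theorem chordGauge_pos {u : E} (hu : u ≠ 0) : 0 < P.chordGauge u :=
  (P.chordGauge_nonneg u).lt_of_ne' (mt P.eq_zero_of_chordGauge_eq_zero hu)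

theorem norm_le_chordGauge_mul {E : Type*} [NormedAddCommGroup E] [NormedSpace ℝ E]
    (P : AffineBasis ι ℝ E) (u : E) : ‖u‖ ≤ P.chordGauge u * ∑ i, ‖P i‖ := by
  conv_lhs => rw [← P.sum_coord_linear_smul u]
  rw [Finset.mul_sum]
  refine (norm_sum_le _ _).trans (Finset.sum_le_sum fun i _ => ?_)
  rw [norm_smul, Real.norm_eq_abs]
  exact mul_le_mul_of_nonneg_right (P.abs_coord_linear_le_chordGauge i u) (norm_nonneg _)

theorem exists_coord_eq {w : ι → ℝ} (hw : ∑ i, w i = 1) : ∃ x, ∀ i, P.coord i x = w i :=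
  ⟨Finset.univ.affineCombination ℝ P w, fun i =>
    P.coord_apply_combination_of_mem (Finset.mem_univ i) hw⟩

theorem exists_segment_subset_convexHull_iff (u : E) :
    (∃ a, segment ℝ a (a + u) ⊆ convexHull ℝ (range P)) ↔ P.chordGauge u ≤ 1 := by
  constructor
  · rintro ⟨a, hseg⟩
    have ha := (P.mem_convexHull_iff a).1 (hseg (left_mem_segment ℝ _ _))
    have hb := (P.mem_convexHull_iff _).1 (hseg (right_mem_segment ℝ _ _))
    calc P.chordGauge u ≤ ∑ i, P.coord i a := Finset.sum_le_sum fun i _ => by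
          have hbi := hb i
          rw [← one_smul ℝ u, coord_add_smul, one_mul] at hbi
          rw [negPart_def]
          exact max_le (by linarith) (ha i)
      _ = 1 := P.sum_coord_apply_eq_one a
  · intro hu
    classical
    obtain ⟨i₀⟩ := P.nonempty
    obtain ⟨a, ha⟩ := P.exists_coord_eq
      (w := fun i => ((P.coord i).linear u)⁻ + if i = i₀ then 1 - P.chordGauge u else 0)
      (by rw [Finset.sum_add_distrib, Finset.sum_ite_eq']; simp [chordGauge])
    refine ⟨a, (convex_convexHull ℝ _).segment_subset ?_ ?_⟩ <;> rw [mem_convexHull_iff] <;> intro i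
    · rw [ha]
      exact add_nonneg (negPart_nonneg _) (by split_ifs <;> linarith)
    · rw [← one_smul ℝ u, coord_add_smul, one_mul, ha]
      have hneg := neg_le_negPart ((P.coord i).linear u)
      have hi₀ : 0 ≤ if i = i₀ then 1 - P.chordGauge u else 0 := by split_ifs <;> linarith
      linarith

def forwardMass (x u : E) : ℝ := ∑ i with 0 ≤ (P.coord i).linear u, P.coord i x

theorem forwardMass_nonneg {x : E} (hx : x ∈ convexHull ℝ (range P)) (u : E) :
    0 ≤ P.forwardMass x u :=
  Finset.sum_nonneg fun i _ => (P.mem_convexHull_iff x).1 hx i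

theorem forwardMass_le_one {x : E} (hx : x ∈ convexHull ℝ (range P)) (u : E) :
    P.forwardMass x u ≤ 1 :=
  (Finset.sum_le_sum_of_subset_of_nonneg (Finset.filter_subset _ _)
    fun i _ _ => (P.mem_convexHull_iff x).1 hx i).trans_eq (P.sum_coord_apply_eq_one x)

theorem mul_chordGauge_add_le_one {x y u : E} {s s' t : ℝ} (hs' : 0 ≤ s')
    (hy : ∀ i, s * P.coord i x ≤ P.coord i y)
    (hyu : ∀ i, s' * P.coord i x ≤ P.coord i (y + t • u)) :
    t * P.chordGauge u + (s - s') * P.forwardMass x u ≤ 1 := by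
  have key : ∀ i, s' * P.coord i x + (t * ((P.coord i).linear u)⁻ +
      (s - s') * if 0 ≤ (P.coord i).linear u then P.coord i x else 0) ≤ P.coord i y := by
    intro i
    have h := hyu i
    rw [coord_add_smul] at h
    split_ifs with hi
    · rw [negPart_eq_zero.2 hi]
      linarith [hy i]
    · rw [negPart_eq_neg.2 (not_le.1 hi).le]
      linarith
  have hsum := Finset.sum_le_sum fun i (_ : i ∈ Finset.univ) => key i
  simp only [Finset.sum_add_distrib, ← Finset.mul_sum, sum_coord_apply_eq_one] at hsum
  rw [chordGauge, forwardMass, Finset.sum_filter]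
  linarith

theorem mul_chordGauge_le_of_mem_convexHull_insert {x y u : E} {t ε : ℝ}
    (hε : 0 ≤ ε) (hy : y ∈ convexHull ℝ (insert x (convexHull ℝ (range P))))
    (hyu : y + t • u ∈ convexHull ℝ (insert x (convexHull ℝ (range P))))
    (hu : -ε ≤ P.forwardMass x u) (hu' : -ε ≤ P.forwardMass x (-u)) :
    t * P.chordGauge u ≤ 1 + ε := by
  obtain ⟨s, hs, hsy⟩ := P.exists_coord_ge_of_mem_convexHull_insert hy
  obtain ⟨s', hs', hsy'⟩ := P.exists_coord_ge_of_mem_convexHull_insert hyu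
  rcases le_total s' s with hss | hss
  · have h := P.mul_chordGauge_add_le_one hs'.1 hsy hsy'
    nlinarith [hs'.1, hs.2]
  · -- the reversed chord `[y + t • u, y]`
    have hsy'' : ∀ i, s * P.coord i x ≤ P.coord i (y + t • u + t • -u) := by
      simpa using hsy
    have h := P.mul_chordGauge_add_le_one hs.1 hsy' hsy''
    rw [chordGauge_neg] at h
    nlinarith [hs.1, hs'.2]

theorem forwardMass_lineMap_ge {p q : E} (hp : p ∈ convexHull ℝ (range P))
    (hq : q ∈ convexHull ℝ (range P)) {η : ℝ} (hη : 0 ≤ η) (u : E) :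
    P.forwardMass p u - η ≤ P.forwardMass (AffineMap.lineMap q p (1 + η)) u := by
  have h : P.forwardMass (AffineMap.lineMap q p (1 + η)) u
      = (1 + η) * P.forwardMass p u - η * P.forwardMass q u := by
    simp only [forwardMass, coord_lineMap, Finset.mul_sum, ← Finset.sum_sub_distrib]
    exact Finset.sum_congr rfl fun i _ => by ring
  nlinarith [P.forwardMass_nonneg hp u, P.forwardMass_le_one hq u]

theorem apply_eq_sum_coord_linear_mul (f : E →ₗ[ℝ] ℝ) (u : E) :
    f u = ∑ i, (P.coord i).linear u * f (P i) := by
  conv_lhs => rw [← P.sum_coord_linear_smul u]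
  simp only [map_sum, map_smul, smul_eq_mul]

theorem exists_mem_facet_apply_eq {f : E →ₗ[ℝ] ℝ} (hf : f ≠ 0) :
    ∃ p ∈ convexHull ℝ (range P), ∃ k, P.coord k p = 0 ∧
      ∃ c > 0, ∀ u, f u = c * ∑ i, (P.coord i).linear u * P.coord i p := by
  obtain ⟨k, -, hk⟩ := Finset.univ.exists_min_image (fun i => f (P i))
    (Finset.univ_nonempty_iff.2 P.nonempty)
  set ψ : ι → ℝ := fun i => f (P i) - f (P k)
  have hψnn : ∀ i, 0 ≤ ψ i := fun i => sub_nonneg.2 (hk i (Finset.mem_univ i))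
  have hψ : ∀ u, f u = ∑ i, (P.coord i).linear u * ψ i := by
    intro u
    simp only [ψ, mul_sub, Finset.sum_sub_distrib, ← Finset.sum_mul, sum_coord_linear, zero_mul,
      sub_zero, ← apply_eq_sum_coord_linear_mul]
  have hpos : 0 < ∑ i, ψ i := by
    refine (Finset.sum_nonneg fun i _ => hψnn i).lt_of_ne' fun h0 => hf (LinearMap.ext fun u => ?_)
    rw [hψ, LinearMap.zero_apply]
    exact Finset.sum_eq_zero fun i hi => mul_eq_zero_of_right _
      ((Finset.sum_eq_zero_iff_of_nonneg fun j _ => hψnn j).1 h0 i hi)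
  obtain ⟨p, hp⟩ := P.exists_coord_eq (w := fun i => ψ i / ∑ j, ψ j)
    (by rw [← Finset.sum_div, div_self hpos.ne'])
  refine ⟨p, (P.mem_convexHull_iff p).2 fun i => ?_, k, by simp [hp, ψ], ∑ j, ψ j, hpos,
    fun u => ?_⟩
  · rw [hp]
    exact div_nonneg (hψnn i) hpos.le
  · simp only [hψ, hp, Finset.mul_sum]
    exact Finset.sum_congr rfl fun i _ => by field_simp

end AffineBasis

section Sublevel

variable {α : Type*} {A : Set α} {f : α → ℝ}

theorem exists_isMinOn_of_finite_sublevel (hA : A.Nonempty)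
    (hfin : ∀ R, {x ∈ A | f x ≤ R}.Finite) : ∃ m ∈ A, IsMinOn f A m := by
  obtain ⟨a, ha⟩ := hA
  obtain ⟨m, ⟨hmA, hma⟩, hmin⟩ := Set.exists_min_image _ f (hfin (f a)) ⟨a, ha, le_rfl⟩
  exact ⟨m, hmA, isMinOn_iff.2 fun x hx =>
    (le_total (f x) (f a)).elim (fun h => hmin x ⟨hx, h⟩) hma.trans⟩

theorem eventually_forall_le_imp_le (hfin : ∀ R, {x ∈ A | f x ≤ R}.Finite) (c : ℝ) :
    ∀ᶠ r in 𝓝 c, ∀ x ∈ A, f x ≤ r → f x ≤ c := by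
  have hF : ∀ᶠ r in 𝓝 c, ∀ x ∈ {x ∈ A | f x ≤ c + 1}, f x ≤ r → f x ≤ c := by
    refine (Filter.eventually_all_finite (hfin (c + 1))).2 fun x _ => ?_
    by_cases h : f x ≤ c
    · exact Filter.Eventually.of_forall fun _ _ => h
    · exact (eventually_lt_nhds (not_le.1 h)).mono fun r hr hxr => absurd hxr (not_le.2 hr)
  filter_upwards [eventually_lt_nhds (lt_add_one c), hF] with r hr hF x hx hxr
  exact hF x ⟨hx, hxr.trans hr.le⟩ hxr

end Sublevel

namespace IsLattice

variable {d : ℕ} {L : Set (Fin d → ℝ)}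

theorem exists_eq_span (hL : IsLattice L) :
    ∃ B : Module.Basis (Fin d) ℝ (Fin d → ℝ), L = Submodule.span ℤ (range B) := by
  obtain ⟨B, rfl⟩ := hL
  refine ⟨B, Set.ext fun v => ?_⟩
  simp only [mem_range, SetLike.mem_coe, Submodule.mem_span_range_iff_exists_fun,
    Int.cast_smul_eq_zsmul]

theorem neg_mem (hL : IsLattice L) {v : Fin d → ℝ} (hv : v ∈ L) : -v ∈ L := by
  obtain ⟨B, rfl⟩ := hL.exists_eq_span
  exact Submodule.neg_mem _ hv

theorem finite_inter (hL : IsLattice L) {s : Set (Fin d → ℝ)} (hs : Bornology.IsBounded s) :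
    (s ∩ L).Finite := by
  obtain ⟨B, rfl⟩ := hL.exists_eq_span
  exact ZSpan.setFinite_inter B hs

theorem nonempty_diff_zero [Nonempty (Fin d)] (hL : IsLattice L) : (L \ {0}).Nonempty := by
  obtain ⟨B, rfl⟩ := hL.exists_eq_span
  obtain ⟨i⟩ := ‹Nonempty (Fin d)›
  exact ⟨B i, Submodule.subset_span (mem_range_self i), B.ne_zero i⟩

end IsLattice

theorem IsConvexBody.convexHull_insert {d : ℕ} {s : Set (Fin d → ℝ)} (hs : s.Finite)
    (hS : IsConvexBody (convexHull ℝ s)) (x : Fin d → ℝ) :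
    IsConvexBody (convexHull ℝ (insert x (convexHull ℝ s))) := by
  rw [← singleton_union, convexHull_convexHull_union_right, singleton_union]
  exact ⟨convex_convexHull ℝ _, (hs.insert x).isCompact_convexHull ℝ,
    hS.2.2.mono (interior_mono (convexHull_mono (subset_insert _ _)))⟩

namespace AffineBasis

variable {d : ℕ} {ι : Type*} [Fintype ι] (P : AffineBasis ι ℝ (Fin d → ℝ)) {L : Set (Fin d → ℝ)}

theorem finite_chordGauge_le (hL : IsLattice L) (R : ℝ) :
    {v ∈ L \ {0} | P.chordGauge v ≤ R}.Finite :=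
  (hL.finite_inter (Metric.isBounded_closedBall (x := 0) (r := R * ∑ i, ‖P i‖))).subset
    fun v ⟨⟨hv, _⟩, hR⟩ => ⟨mem_closedBall_zero_iff.2 ((P.norm_le_chordGauge_mul v).trans
      (mul_le_mul_of_nonneg_right hR (by positivity))), hv⟩

theorem isPrimitiveVec_of_isMinOn {v : Fin d → ℝ} (hv : v ∈ L \ {0})
    (hmin : IsMinOn P.chordGauge (L \ {0}) v) : IsPrimitiveVec L v := by
  refine ⟨hv.1, hv.2, fun t ht0 ht1 htv => ?_⟩
  have h := isMinOn_iff.1 hmin (t • v) ⟨htv, smul_ne_zero ht0.ne' hv.2⟩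
  rw [chordGauge_smul P ht0.le] at h
  nlinarith [P.chordGauge_pos hv.2]

theorem exists_segment_inv_chordGauge_smul_subset {u : Fin d → ℝ} (hu : u ≠ 0) :
    ∃ a, segment ℝ a (a + (P.chordGauge u)⁻¹ • u) ⊆ convexHull ℝ (range P) := by
  have hpos := P.chordGauge_pos hu
  refine (P.exists_segment_subset_convexHull_iff _).2 ?_
  rw [chordGauge_smul P (inv_nonneg.2 hpos.le), inv_mul_cancel₀ hpos.ne']

theorem latticeDiam_eq_inv_of_isMinOn {C : Set (Fin d → ℝ)} {m : Fin d → ℝ}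
    (hm : m ∈ L \ {0}) (hmin : IsMinOn P.chordGauge (L \ {0}) m)
    (hSC : convexHull ℝ (range P) ⊆ C)
    (hC : ∀ t a v, 0 ≤ t → v ∈ L \ {0} → segment ℝ a (a + t • v) ⊆ C →
      t * P.chordGauge m ≤ 1) :
    latticeDiam C L = (P.chordGauge m)⁻¹ := by
  have hpos := P.chordGauge_pos hm.2
  obtain ⟨a, ha⟩ := P.exists_segment_inv_chordGauge_smul_subset hm.2
  refine IsGreatest.csSup_eq ⟨⟨inv_nonneg.2 hpos.le, a, m, P.isPrimitiveVec_of_isMinOn hm hmin,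
    ha.trans hSC⟩, ?_⟩
  rintro t ⟨ht, b, v, hv, hseg⟩
  rw [← one_div, le_div_iff₀ hpos]
  exact hC t b v ht ⟨hv.1, hv.2.1⟩ hseg

theorem latticeDiam_convexHull {m : Fin d → ℝ} (hm : m ∈ L \ {0})
    (hmin : IsMinOn P.chordGauge (L \ {0}) m) :
    latticeDiam (convexHull ℝ (range P)) L = (P.chordGauge m)⁻¹ :=
  P.latticeDiam_eq_inv_of_isMinOn hm hmin subset_rfl fun t a v ht hv hseg => by
    have h := (P.exists_segment_subset_convexHull_iff _).1 ⟨a, hseg⟩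
    rw [chordGauge_smul P ht] at h
    exact (mul_le_mul_of_nonneg_left (isMinOn_iff.1 hmin v hv) ht).trans h

theorem isDiameterDirection_of_isMinOn {v : Fin d → ℝ} (hv : v ∈ L \ {0})
    (hmin : IsMinOn P.chordGauge (L \ {0}) v) :
    IsDiameterDirection (convexHull ℝ (range P)) L v := by
  refine ⟨P.isPrimitiveVec_of_isMinOn hv hmin, ?_⟩
  rw [P.latticeDiam_convexHull hv hmin]
  exact P.exists_segment_inv_chordGauge_smul_subset hv.2

theorem latticeDiam_convexHull_insert (hL : IsLattice L) {m x : Fin d → ℝ} (hm : m ∈ L \ {0})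
    (hmin : IsMinOn P.chordGauge (L \ {0}) m) {η : ℝ} (hη : 0 ≤ η)
    (hgap : ∀ v ∈ L \ {0}, P.chordGauge v ≤ (1 + η) * P.chordGauge m →
      P.chordGauge v ≤ P.chordGauge m)
    (hx : ∀ u, -η ≤ P.forwardMass x u)
    (hxmin : ∀ v ∈ L \ {0}, P.chordGauge v = P.chordGauge m → 0 ≤ P.forwardMass x v) :
    latticeDiam (convexHull ℝ (insert x (convexHull ℝ (range P)))) L = (P.chordGauge m)⁻¹ := by
  refine P.latticeDiam_eq_inv_of_isMinOn hm hmin ((subset_insert _ _).trans (subset_convexHull ℝ _))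
    fun t a v ht hv hseg => ?_
  have hy := hseg (left_mem_segment ℝ _ _)
  have hyv := hseg (right_mem_segment ℝ _ _)
  have hmv := isMinOn_iff.1 hmin v hv
  by_cases hvm : P.chordGauge v = P.chordGauge m
  · have hv' : -v ∈ L \ {0} := ⟨hL.neg_mem hv.1, neg_ne_zero.2 hv.2⟩
    have h := P.mul_chordGauge_le_of_mem_convexHull_insert le_rfl hy hyv
      (by simpa using hxmin v hv hvm)
      (by simpa using hxmin (-v) hv' (by rw [chordGauge_neg, hvm]))
    rw [hvm] at h
    linarith
  · have hgt : (1 + η) * P.chordGauge m < P.chordGauge v :=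
      lt_of_not_ge fun h => hvm (le_antisymm (hgap v hv h) hmv)
    have h := P.mul_chordGauge_le_of_mem_convexHull_insert hη hy hyv (hx v) (hx (-v))
    nlinarith [mul_le_mul_of_nonneg_left hgt.le ht]

theorem coord_le_forwardMass {p v : Fin d → ℝ} (hp : p ∈ convexHull ℝ (range P)) {i : ι}
    (hi : 0 ≤ (P.coord i).linear v) : P.coord i p ≤ P.forwardMass p v :=
  Finset.single_le_sum (fun j _ => (P.mem_convexHull_iff p).1 hp j)
    (Finset.mem_filter.2 ⟨Finset.mem_univ i, hi⟩)

theorem exists_notMem_latticeDiam_convexHull_insert_eq (hL : IsLattice L) {m : Fin d → ℝ}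
    (hm : m ∈ L \ {0}) (hmin : IsMinOn P.chordGauge (L \ {0}) m)
    {f : (Fin d → ℝ) →ₗ[ℝ] ℝ} (hf : f ≠ 0)
    (hfV : ∀ v ∈ L \ {0}, IsMinOn P.chordGauge (L \ {0}) v → f v = 0) :
    ∃ x ∉ convexHull ℝ (range P), latticeDiam (convexHull ℝ (insert x (convexHull ℝ (range P)))) L
      = latticeDiam (convexHull ℝ (range P)) L := by
  obtain ⟨p, hp, k, hpk, c, hc, hfp⟩ := P.exists_mem_facet_apply_eq hf
  have hcoord : ∀ᶠ η in 𝓝[>] (0 : ℝ), ∀ i, 0 < P.coord i p → η ≤ P.coord i p :=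
    Filter.eventually_all.2 fun i => nhdsWithin_le_nhds <| by
      by_cases hi : 0 < P.coord i p
      · exact (eventually_le_nhds hi).mono fun _ h _ => h
      · exact Filter.Eventually.of_forall fun _ h => absurd h hi
  have hgap : ∀ᶠ η in 𝓝[>] (0 : ℝ), ∀ v ∈ L \ {0},
      P.chordGauge v ≤ (1 + η) * P.chordGauge m → P.chordGauge v ≤ P.chordGauge m :=
    nhdsWithin_le_nhds <| (((continuous_const.add continuous_id).mul continuous_const).tendsto' 0 _
      (by simp)).eventually (eventually_forall_le_imp_le (P.finite_chordGauge_le hL) _)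
  obtain ⟨η, ⟨hηp, hηg⟩, hη⟩ := ((hcoord.and hgap).and self_mem_nhdsWithin).exists
  have hPk : P k ∈ convexHull ℝ (range P) := subset_convexHull ℝ _ (mem_range_self k)
  refine ⟨AffineMap.lineMap (P k) p (1 + η), fun hx => ?_, ?_⟩
  · have h := (P.mem_convexHull_iff _).1 hx k
    rw [coord_lineMap, hpk, coord_apply_eq] at h
    linarith [show (0 : ℝ) < η from hη]
  rw [P.latticeDiam_convexHull hm hmin]
  refine P.latticeDiam_convexHull_insert hL hm hmin hη.le hηg (fun u => ?_) fun v hv hvm => ?_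
  · linarith [P.forwardMass_lineMap_ge hp hPk hη.le u, P.forwardMass_nonneg hp u]
  have hmv : IsMinOn P.chordGauge (L \ {0}) v :=
    isMinOn_iff.2 fun w hw => hvm ▸ isMinOn_iff.1 hmin w hw
  have hsum : ∑ i, (P.coord i).linear v * P.coord i p = 0 := by
    simpa [hc.ne'] using (hfp v).symm.trans (hfV v hv hmv)
  obtain ⟨i, -, hvi, hpi⟩ := exists_nonneg_and_pos_of_sum_mul_eq_zero
    (fun i _ => (P.mem_convexHull_iff p).1 hp i)
    (Finset.exists_ne_zero_of_sum_ne_zero (by rw [P.sum_coord_apply_eq_one]; exact one_ne_zero))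
    hsum
  linarith [P.forwardMass_lineMap_ge hp hPk hη.le v, P.coord_le_forwardMass hp hvi, hηp i hpi]

end AffineBasis

/-- the diameter directions of a lattice complete `d`-simplex
span all of `ℝ^d`. -/
theorem complete_simplex_diameter_directions_span {d : ℕ}
    (S L : Set (Fin d → ℝ)) (hL : IsLattice L)
    (hsimplex : ∃ v : Fin (d + 1) → (Fin d → ℝ),
      AffineIndependent ℝ v ∧ S = convexHull ℝ (Set.range v))
    (hcomp : IsLatticeComplete S L) :
    Submodule.span ℝ {v | IsDiameterDirection S L v} = ⊤ := by
  rcases isEmpty_or_nonempty (Fin d) with hd | hd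
  · exact Subsingleton.elim _ _
  obtain ⟨v, hv, rfl⟩ := hsimplex
  let P : AffineBasis (Fin (d + 1)) ℝ (Fin d → ℝ) :=
    ⟨v, hv, hv.affineSpan_eq_top_iff_card_eq_finrank_add_one.2 (by simp)⟩
  change IsLatticeComplete (convexHull ℝ (range P)) L at hcomp
  change Submodule.span ℝ {u | IsDiameterDirection (convexHull ℝ (range P)) L u} = ⊤
  obtain ⟨m, hm, hmin⟩ :=
    exists_isMinOn_of_finite_sublevel hL.nonempty_diff_zero (P.finite_chordGauge_le hL)
  by_contra hspan
  obtain ⟨f, hf, hfV⟩ :=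
    Submodule.exists_dual_map_eq_bot_of_lt_top (lt_top_iff_ne_top.2 hspan) inferInstance
  obtain ⟨x, hx, hdiam⟩ := P.exists_notMem_latticeDiam_convexHull_insert_eq hL hm hmin hf
    fun u hu humin => (Submodule.eq_bot_iff _).1 hfV _
      (Submodule.mem_map_of_mem (Submodule.subset_span (P.isDiameterDirection_of_isMinOn hu humin)))
  have hSC : convexHull ℝ (range P) ⊆ convexHull ℝ (insert x (convexHull ℝ (range P))) :=
    (subset_insert _ _).trans (subset_convexHull ℝ _)
  exact hcomp.2 _ (hcomp.1.convexHull_insert (finite_range P) x)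
    ((ssubset_iff_of_subset hSC).2 ⟨x, subset_convexHull ℝ _ (mem_insert x _), hx⟩) hdiam
end
end
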